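/- If w ∈ A₁^ρ and 1 < p < ∞, then w^{1−p} ∈ A_p^ρ ∩ RH_∞^ρ. In particular, the proof shows that if w ∈ A₁^{ρ,θ} then w^{1−p} ∈ RH_∞^{ρ, θ/(p'−1)}. -/

import Mathlib

open MeasureTheory

noncomputable section

/-- The axis-parallel cube centered at `x` with "radius" `r = √d · ℓ(Q)/2`,
i.e. side length `2r/√d`. -/
def cube (d : ℕ) (x : EuclideanSpace ℝ (Fin d)) (r : ℝ) :
    Set (EuclideanSpace ℝ (Fin d)) :=
  {y | ∀ i, |y i - x i| ≤ r / Real.sqrt d}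

/-- Average `(1/|Q|) ∫_Q w` over the cube `Q(x,r)`. -/
def cubeAvg {d : ℕ} (x : EuclideanSpace ℝ (Fin d)) (r : ℝ)
    (w : EuclideanSpace ℝ (Fin d) → ℝ) : ℝ :=
  (volume (cube d x r)).toReal⁻¹ * ∫ y in cube d x r, w y

/-- Weighted average `(1/u(Q)) ∫_Q v·u` over the cube `Q(x,r)`. -/
def cubeAvgW {d : ℕ} (x : EuclideanSpace ℝ (Fin d)) (r : ℝ)
    (u v : EuclideanSpace ℝ (Fin d) → ℝ) : ℝ :=
  (∫ y in cube d x r, u y)⁻¹ * ∫ y in cube d x r, v y * u y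

/-- Essential infimum of `w` over the cube `Q(x,r)`. -/
def cubeInf {d : ℕ} (x : EuclideanSpace ℝ (Fin d)) (r : ℝ)
    (w : EuclideanSpace ℝ (Fin d) → ℝ) : ℝ :=
  essInf w (volume.restrict (cube d x r))

/-- Essential supremum of `w` over the cube `Q(x,r)`. -/
def cubeSup {d : ℕ} (x : EuclideanSpace ℝ (Fin d)) (r : ℝ)
    (w : EuclideanSpace ℝ (Fin d) → ℝ) : ℝ :=
  essSup w (volume.restrict (cube d x r))

/-- `ρ` is a critical radius function with constants `C₀ > 0` and `N₀ ≥ 1`: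
`C₀⁻¹ ρ(x)(1+|x−y|/ρ(x))^{−N₀} ≤ ρ(y) ≤ C₀ ρ(x)(1+|x−y|/ρ(x))^{N₀/(N₀+1)}`. -/
def IsCRF {d : ℕ} (ρ : EuclideanSpace ℝ (Fin d) → ℝ) (C₀ N₀ : ℝ) : Prop :=
  (∀ x, 0 < ρ x) ∧
    ∀ x y, C₀⁻¹ * ρ x * (1 + dist x y / ρ x) ^ (-N₀) ≤ ρ y ∧
      ρ y ≤ C₀ * ρ x * (1 + dist x y / ρ x) ^ (N₀ / (N₀ + 1))

/-- A weight: a locally integrable function which is positive a.e. -/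
def IsWeight {d : ℕ} (w : EuclideanSpace ℝ (Fin d) → ℝ) : Prop :=
  LocallyIntegrable w volume ∧ ∀ᵐ x ∂(volume : Measure (EuclideanSpace ℝ (Fin d))), 0 < w x

/-- The class `A₁^{ρ,θ}` with explicit constant `C`. -/
def A1C {d : ℕ} (ρ : EuclideanSpace ℝ (Fin d) → ℝ) (θ C : ℝ)
    (w : EuclideanSpace ℝ (Fin d) → ℝ) : Prop :=
  ∀ x r, 0 < r → cubeAvg x r w ≤ C * (1 + r / ρ x) ^ θ * cubeInf x r w

/-- The class `A₁^{ρ,θ}`. -/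
def memA1 {d : ℕ} (ρ : EuclideanSpace ℝ (Fin d) → ℝ) (θ : ℝ)
    (w : EuclideanSpace ℝ (Fin d) → ℝ) : Prop :=
  ∃ C > 0, A1C ρ θ C w

/-- The class `A₁^ρ = ∪_{θ ≥ 0} A₁^{ρ,θ}`. -/
def A1 {d : ℕ} (ρ : EuclideanSpace ℝ (Fin d) → ℝ)
    (w : EuclideanSpace ℝ (Fin d) → ℝ) : Prop :=
  ∃ θ ≥ 0, memA1 ρ θ w

/-- The class `A_p^{ρ,θ}` (for `1 < p < ∞`) with explicit constant `C`;
here `p' = p/(p-1)`. -/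
def ApC {d : ℕ} (ρ : EuclideanSpace ℝ (Fin d) → ℝ) (p θ C : ℝ)
    (w : EuclideanSpace ℝ (Fin d) → ℝ) : Prop :=
  ∀ x r, 0 < r →
    (cubeAvg x r w) ^ (1 / p) *
      (cubeAvg x r fun y => w y ^ (1 - p / (p - 1))) ^ (1 - 1 / p) ≤
        C * (1 + r / ρ x) ^ θ

/-- The class `A_p^{ρ,θ}` for `1 < p < ∞`. -/
def memAp {d : ℕ} (ρ : EuclideanSpace ℝ (Fin d) → ℝ) (p θ : ℝ)
    (w : EuclideanSpace ℝ (Fin d) → ℝ) : Prop :=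
  ∃ C > 0, ApC ρ p θ C w

/-- The class `A_p^ρ = ∪_{θ ≥ 0} A_p^{ρ,θ}` for `1 < p < ∞`. -/
def Ap {d : ℕ} (ρ : EuclideanSpace ℝ (Fin d) → ℝ) (p : ℝ)
    (w : EuclideanSpace ℝ (Fin d) → ℝ) : Prop :=
  ∃ θ ≥ 0, memAp ρ p θ w

/-- The class `A_∞^ρ = ∪_{p > 1} A_p^ρ`. -/
def Ainf {d : ℕ} (ρ : EuclideanSpace ℝ (Fin d) → ℝ)
    (w : EuclideanSpace ℝ (Fin d) → ℝ) : Prop :=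
  ∃ p, 1 < p ∧ Ap ρ p w

/-- The reverse Hölder class `RH_s^{ρ,θ}` with explicit constant `C`. -/
def RHC {d : ℕ} (ρ : EuclideanSpace ℝ (Fin d) → ℝ) (s θ C : ℝ)
    (w : EuclideanSpace ℝ (Fin d) → ℝ) : Prop :=
  ∀ x r, 0 < r →
    (cubeAvg x r fun y => w y ^ s) ^ (1 / s) ≤
      C * (1 + r / ρ x) ^ θ * cubeAvg x r w

/-- The reverse Hölder class `RH_s^{ρ,θ}`. -/
def memRH {d : ℕ} (ρ : EuclideanSpace ℝ (Fin d) → ℝ) (s θ : ℝ)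
    (w : EuclideanSpace ℝ (Fin d) → ℝ) : Prop :=
  ∃ C > 0, RHC ρ s θ C w

/-- The class `RH_s^ρ = ∪_{θ ≥ 0} RH_s^{ρ,θ}`. -/
def RH {d : ℕ} (ρ : EuclideanSpace ℝ (Fin d) → ℝ) (s : ℝ)
    (w : EuclideanSpace ℝ (Fin d) → ℝ) : Prop :=
  ∃ θ ≥ 0, memRH ρ s θ w

/-- The class `RH_∞^{ρ,θ}` with explicit constant `C`. -/
def RHinfC {d : ℕ} (ρ : EuclideanSpace ℝ (Fin d) → ℝ) (θ C : ℝ)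
    (w : EuclideanSpace ℝ (Fin d) → ℝ) : Prop :=
  ∀ x r, 0 < r → cubeSup x r w ≤ C * (1 + r / ρ x) ^ θ * cubeAvg x r w

/-- The class `RH_∞^{ρ,θ}`. -/
def memRHinf {d : ℕ} (ρ : EuclideanSpace ℝ (Fin d) → ℝ) (θ : ℝ)
    (w : EuclideanSpace ℝ (Fin d) → ℝ) : Prop :=
  ∃ C > 0, RHinfC ρ θ C w

/-- The class `RH_∞^ρ = ∪_{θ ≥ 0} RH_∞^{ρ,θ}`. -/
def RHinf {d : ℕ} (ρ : EuclideanSpace ℝ (Fin d) → ℝ)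
    (w : EuclideanSpace ℝ (Fin d) → ℝ) : Prop :=
  ∃ θ ≥ 0, memRHinf ρ θ w

/-- The weighted class `A_p^{ρ,θ}(u)` (for `1 < p < ∞`) with explicit constant `C`. -/
def ApWC {d : ℕ} (ρ u : EuclideanSpace ℝ (Fin d) → ℝ) (p θ C : ℝ)
    (v : EuclideanSpace ℝ (Fin d) → ℝ) : Prop :=
  ∀ x r, 0 < r →
    (cubeAvgW x r u v) ^ (1 / p) *
      (cubeAvgW x r u fun y => v y ^ (1 - p / (p - 1))) ^ (1 - 1 / p) ≤
        C * (1 + r / ρ x) ^ θ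

/-- The weighted class `A_p^{ρ,θ}(u)` for `1 < p < ∞`. -/
def memApW {d : ℕ} (ρ u : EuclideanSpace ℝ (Fin d) → ℝ) (p θ : ℝ)
    (v : EuclideanSpace ℝ (Fin d) → ℝ) : Prop :=
  ∃ C > 0, ApWC ρ u p θ C v

/-- The weighted class `A_p^ρ(u) = ∪_{θ ≥ 0} A_p^{ρ,θ}(u)` for `1 < p < ∞`. -/
def ApW {d : ℕ} (ρ u : EuclideanSpace ℝ (Fin d) → ℝ) (p : ℝ)
    (v : EuclideanSpace ℝ (Fin d) → ℝ) : Prop :=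
  ∃ θ ≥ 0, memApW ρ u p θ v

/-- The weighted class `A₁^{ρ,θ}(u)`. -/
def memA1W {d : ℕ} (ρ u : EuclideanSpace ℝ (Fin d) → ℝ) (θ : ℝ)
    (v : EuclideanSpace ℝ (Fin d) → ℝ) : Prop :=
  ∃ C > 0, ∀ x r, 0 < r → cubeAvgW x r u v ≤ C * (1 + r / ρ x) ^ θ * cubeInf x r v

/-- The weighted class `A₁^ρ(u)`. -/
def A1W {d : ℕ} (ρ u : EuclideanSpace ℝ (Fin d) → ℝ)
    (v : EuclideanSpace ℝ (Fin d) → ℝ) : Prop :=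
  ∃ θ ≥ 0, memA1W ρ u θ v

/-- The weighted class `A_∞^ρ(u) = ∪_{p > 1} A_p^ρ(u)`. -/
def AinfW {d : ℕ} (ρ u : EuclideanSpace ℝ (Fin d) → ℝ)
    (v : EuclideanSpace ℝ (Fin d) → ℝ) : Prop :=
  ∃ p, 1 < p ∧ ApW ρ u p v


/-!
Let `m` be the essential infimum of `w` on a cube `Q` and `K = C (1 + r/ρ(x))^θ`, so that the
`A₁` condition reads `⨍_Q w ≤ K m`. Since `w ≥ m` a.e. on `Q` and `1 - p < 0`,
`w^{1-p} ≤ m^{1-p}` a.e. on `Q`; this bounds both `ess sup_Q w^{1-p}` and `⨍_Q w^{1-p}` by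
`m^{1-p}`. Jensen's inequality for the convex function `t ↦ t^{1-p}` gives
`m^{1-p} = K^{p-1} (K m)^{1-p} ≤ K^{p-1} (⨍_Q w)^{1-p} ≤ K^{p-1} ⨍_Q w^{1-p}`, which is
`RH_∞` with exponent `θ (p - 1) = θ / (p' - 1)`. Since `(w^{1-p})^{1-p'} = w`, the `A_p`
quantity is `(⨍_Q w^{1-p})^{1/p} (⨍_Q w)^{1/p'} ≤ m^{(1-p)/p} (K m)^{1/p'} = K^{1/p'}`.
-/

open Set Filter

theorem convexOn_rpow_of_nonpos {a : ℝ} (ha : a ≤ 0) :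
    ConvexOn ℝ (Ioi 0) fun x : ℝ => x ^ a := by
  have hlog : ConvexOn ℝ (Ioi 0) fun x => a * Real.log x := by
    simpa using strictConcaveOn_log_Ioi.concaveOn.neg.smul (neg_nonneg.2 ha)
  have himage : Convex ℝ ((fun x => a * Real.log x) '' Ioi 0) :=
    (isPreconnected_Ioi.image _ (continuousOn_const.mul
      (Real.continuousOn_log.mono fun _ hx => ne_of_gt hx))).ordConnected.convex
  refine (ConvexOn.comp (convexOn_exp.subset (subset_univ _) himage) hlog
    (Real.exp_monotone.monotoneOn _)).congr fun x hx => ?_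
  simp [Real.rpow_def_of_pos (show 0 < x from hx), mul_comm]

section Average

variable {α : Type*} [MeasurableSpace α] {μ : Measure α}

theorem average_mono_ae {f g : α → ℝ} (hf : Integrable f μ) (hg : Integrable g μ)
    (h : f ≤ᵐ[μ] g) : ⨍ x, f x ∂μ ≤ ⨍ x, g x ∂μ := by
  simp only [average_eq, smul_eq_mul]
  exact mul_le_mul_of_nonneg_left (integral_mono_ae hf hg h) (by positivity)

theorem average_pos_of_ae_pos [IsFiniteMeasure μ] [NeZero μ] {f : α → ℝ}
    (hf : Integrable f μ) (hpos : ∀ᵐ x ∂μ, 0 < f x) : 0 < ⨍ x, f x ∂μ := by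
  rw [average_eq, smul_eq_mul]
  refine mul_pos (inv_pos.2 measureReal_univ_pos) ?_
  rw [integral_pos_iff_support_of_nonneg_ae (hpos.mono fun _ hx => hx.le) hf]
  calc 0 < μ univ := Measure.measure_univ_pos.2 (NeZero.ne μ)
    _ = μ {x | 0 < f x} := (measure_congr (ae_eq_univ.2 hpos)).symm
    _ ≤ μ (Function.support f) := measure_mono fun _ hx => ne_of_gt hx

theorem integrable_rpow_of_nonpos [IsFiniteMeasure μ] {f : α → ℝ} {a m : ℝ}
    (hf : AEMeasurable f μ) (ha : a ≤ 0) (hm : 0 < m) (hmf : ∀ᵐ x ∂μ, m ≤ f x) :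
    Integrable (fun x => f x ^ a) μ := by
  refine Integrable.of_bound (hf.pow_const a).aestronglyMeasurable (m ^ a) ?_
  filter_upwards [hmf] with x hx
  rw [Real.norm_of_nonneg (Real.rpow_nonneg (hm.le.trans hx) a)]
  exact Real.rpow_le_rpow_of_nonpos hm hx ha

theorem essSup_rpow_le_of_nonpos [NeZero μ] {f : α → ℝ} {a m : ℝ} (ha : a ≤ 0) (hm : 0 < m)
    (hmf : ∀ᵐ x ∂μ, m ≤ f x) : essSup (fun x => f x ^ a) μ ≤ m ^ a := by
  have : (ae μ).NeBot := ae_neBot.2 (NeZero.ne μ)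
  exact essSup_le_of_ae_le _ (hmf.mono fun _ hx => Real.rpow_le_rpow_of_nonpos hm hx ha)
    (isCoboundedUnder_le_of_eventually_le _
      (hmf.mono fun _ hx => Real.rpow_nonneg (hm.le.trans hx) a))

theorem rpow_average_le_average_rpow_of_nonpos [IsFiniteMeasure μ] [NeZero μ] {f : α → ℝ}
    {a m : ℝ} (ha : a ≤ 0) (hm : 0 < m) (hmf : ∀ᵐ x ∂μ, m ≤ f x) (hf : Integrable f μ) :
    (⨍ x, f x ∂μ) ^ a ≤ ⨍ x, f x ^ a ∂μ :=
  ((convexOn_rpow_of_nonpos ha).subset (Ici_subset_Ioi.2 hm) (convex_Ici m)).map_average_le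
    (continuousOn_id.rpow_const fun _ hx => Or.inl (hm.trans_le hx).ne') isClosed_Ici hmf hf
    (integrable_rpow_of_nonpos hf.aemeasurable ha hm hmf)

variable [IsFiniteMeasure μ] [NeZero μ] {w : α → ℝ} {K m p : ℝ}

theorem rpow_one_sub_le_mul_average_rpow_of_average_le (hp : 1 < p) (hK : 0 < K)
    (hm : 0 < m) (hmw : ∀ᵐ x ∂μ, m ≤ w x) (hw : Integrable w μ)
    (hA : ⨍ x, w x ∂μ ≤ K * m) :
    m ^ (1 - p) ≤ K ^ (p - 1) * ⨍ x, w x ^ (1 - p) ∂μ := by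
  have havg : 0 < ⨍ x, w x ∂μ := average_pos_of_ae_pos hw (hmw.mono fun _ hx => hm.trans_le hx)
  calc m ^ (1 - p) = K ^ (p - 1) * (K * m) ^ (1 - p) := by
        rw [Real.mul_rpow hK.le hm.le, ← mul_assoc, ← Real.rpow_add hK]
        simp
    _ ≤ K ^ (p - 1) * (⨍ x, w x ∂μ) ^ (1 - p) :=
        mul_le_mul_of_nonneg_left (Real.rpow_le_rpow_of_nonpos havg hA (by linarith))
          (by positivity)
    _ ≤ K ^ (p - 1) * ⨍ x, w x ^ (1 - p) ∂μ := by
        gcongr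
        exact rpow_average_le_average_rpow_of_nonpos (by linarith) hm hmw hw

theorem average_rpow_mul_average_le_of_average_le (hp : 1 < p) (hK : 0 < K)
    (hm : 0 < m) (hmw : ∀ᵐ x ∂μ, m ≤ w x) (hw : Integrable w μ)
    (hA : ⨍ x, w x ∂μ ≤ K * m) :
    (⨍ x, w x ^ (1 - p) ∂μ) ^ (1 / p) * (⨍ x, w x ∂μ) ^ (1 - 1 / p) ≤ K ^ (1 - 1 / p) := by
  have hp0 : 0 < p := by linarith
  have hwp : ∀ᵐ x ∂μ, w x ^ (1 - p) ≤ m ^ (1 - p) :=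
    hmw.mono fun _ hx => Real.rpow_le_rpow_of_nonpos hm hx (by linarith)
  have hwpi : Integrable (fun x => w x ^ (1 - p)) μ :=
    integrable_rpow_of_nonpos hw.aemeasurable (by linarith) hm hmw
  have hwp_avg : ⨍ x, w x ^ (1 - p) ∂μ ≤ m ^ (1 - p) := by
    simpa using average_mono_ae hwpi (integrable_const _) hwp
  have hw_avg : 0 ≤ ⨍ x, w x ∂μ :=
    (average_pos_of_ae_pos hw (hmw.mono fun _ hx => hm.trans_le hx)).le
  have hwp_avg_nonneg : 0 ≤ ⨍ x, w x ^ (1 - p) ∂μ :=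
    (average_pos_of_ae_pos hwpi
      (hmw.mono fun _ hx => Real.rpow_pos_of_pos (hm.trans_le hx) _)).le
  have hexp : (1 - p) * (1 / p) + (1 - 1 / p) = 0 := by field_simp; ring
  calc (⨍ x, w x ^ (1 - p) ∂μ) ^ (1 / p) * (⨍ x, w x ∂μ) ^ (1 - 1 / p)
      ≤ (m ^ (1 - p)) ^ (1 / p) * (K * m) ^ (1 - 1 / p) := by
        gcongr
        exact sub_nonneg.2 ((div_le_one hp0).2 hp.le)
    _ = K ^ (1 - 1 / p) := by
        rw [← Real.rpow_mul hm.le, Real.mul_rpow hK.le hm.le, mul_left_comm,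
          ← Real.rpow_add hm, hexp, Real.rpow_zero, mul_one]

end Average

section Cube

variable {d : ℕ}

theorem cube_eq_preimage_Icc (x : EuclideanSpace ℝ (Fin d)) (r : ℝ) :
    cube d x r = EuclideanSpace.equiv (Fin d) ℝ ⁻¹'
      Icc (fun i => x i - r / Real.sqrt d) (fun i => x i + r / Real.sqrt d) := by
  ext y
  simp [cube, abs_sub_le_iff, Pi.le_def, forall_and, and_comm, add_comm]

theorem isCompact_cube (x : EuclideanSpace ℝ (Fin d)) (r : ℝ) : IsCompact (cube d x r) := by
  rw [cube_eq_preimage_Icc]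
  exact (EuclideanSpace.equiv (Fin d) ℝ).toHomeomorph.isCompact_preimage.2 isCompact_Icc

theorem volume_cube_pos (x : EuclideanSpace ℝ (Fin d)) {r : ℝ} (hr : 0 < r) :
    0 < volume (cube d x r) := by
  have hopen : IsOpen {y : EuclideanSpace ℝ (Fin d) | ∀ i, |y i - x i| < r / Real.sqrt d} := by
    simp only [ofPred_forall]
    exact isOpen_iInter_of_finite fun i => isOpen_lt (by fun_prop) continuous_const
  refine (hopen.measure_pos volume ⟨x, fun i => ?_⟩).trans_le
    (measure_mono fun y hy i => (hy i).le)
  simpa using div_pos hr (Real.sqrt_pos.2 (Nat.cast_pos.2 i.pos))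

instance isFiniteMeasure_restrict_cube (x : EuclideanSpace ℝ (Fin d)) (r : ℝ) :
    IsFiniteMeasure (volume.restrict (cube d x r)) :=
  isFiniteMeasure_restrict.2 (isCompact_cube x r).measure_ne_top

theorem neZero_restrict_cube (x : EuclideanSpace ℝ (Fin d)) {r : ℝ} (hr : 0 < r) :
    NeZero (volume.restrict (cube d x r)) :=
  ⟨mt Measure.restrict_eq_zero.1 (volume_cube_pos x hr).ne'⟩

theorem cubeAvg_eq_setAverage (x : EuclideanSpace ℝ (Fin d)) (r : ℝ)
    (f : EuclideanSpace ℝ (Fin d) → ℝ) : cubeAvg x r f = ⨍ y in cube d x r, f y := by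
  rw [setAverage_eq, smul_eq_mul, cubeAvg, measureReal_def]

theorem cubeAvg_congr_ae (x : EuclideanSpace ℝ (Fin d)) (r : ℝ)
    {f g : EuclideanSpace ℝ (Fin d) → ℝ} (h : f =ᵐ[volume] g) :
    cubeAvg x r f = cubeAvg x r g := by
  rw [cubeAvg, cubeAvg, integral_congr_ae (ae_restrict_of_ae h)]

theorem ae_cubeInf_le {w : EuclideanSpace ℝ (Fin d) → ℝ} (hw : ∀ᵐ y, 0 < w y)
    (x : EuclideanSpace ℝ (Fin d)) (r : ℝ) :
    ∀ᵐ y ∂volume.restrict (cube d x r), cubeInf x r w ≤ w y :=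
  ae_essInf_le ⟨0, eventually_map.2 (ae_restrict_of_ae (hw.mono fun _ hy => hy.le))⟩

end Cube

namespace A1C

variable {d : ℕ} {ρ w : EuclideanSpace ℝ (Fin d) → ℝ} {θ C p : ℝ}

theorem setAverage_le (hA : A1C ρ θ C w) (x : EuclideanSpace ℝ (Fin d)) {r : ℝ} (hr : 0 < r) :
    ⨍ y in cube d x r, w y ≤ C * (1 + r / ρ x) ^ θ * cubeInf x r w :=
  cubeAvg_eq_setAverage x r w ▸ hA x r hr

theorem cubeInf_pos (hρ : ∀ x, 0 < ρ x) (hw : IsWeight w) (hC : 0 < C) (hA : A1C ρ θ C w)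
    (x : EuclideanSpace ℝ (Fin d)) {r : ℝ} (hr : 0 < r) : 0 < cubeInf x r w := by
  have := neZero_restrict_cube x hr
  have havg : 0 < ⨍ y in cube d x r, w y :=
    average_pos_of_ae_pos (hw.1.integrableOn_isCompact (isCompact_cube x r))
      (ae_restrict_of_ae hw.2)
  have hK : 0 < C * (1 + r / ρ x) ^ θ := by have := hρ x; positivity
  exact pos_of_mul_pos_right (havg.trans_le (hA.setAverage_le x hr)) hK.le

theorem rhinfC_rpow_one_sub (hρ : ∀ x, 0 < ρ x) (hw : IsWeight w) (hC : 0 < C)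
    (hA : A1C ρ θ C w) (hp : 1 < p) :
    RHinfC ρ (θ * (p - 1)) (C ^ (p - 1)) fun y => w y ^ (1 - p) := by
  intro x r hr
  have := neZero_restrict_cube x hr
  have hb : 0 < 1 + r / ρ x := by have := hρ x; positivity
  have hm := hA.cubeInf_pos hρ hw hC x hr
  have hmw := ae_cubeInf_le hw.2 x r
  calc cubeSup x r (fun y => w y ^ (1 - p)) ≤ cubeInf x r w ^ (1 - p) :=
        essSup_rpow_le_of_nonpos (by linarith) hm hmw
    _ ≤ (C * (1 + r / ρ x) ^ θ) ^ (p - 1) * cubeAvg x r fun y => w y ^ (1 - p) := by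
        rw [cubeAvg_eq_setAverage]
        exact rpow_one_sub_le_mul_average_rpow_of_average_le hp (by positivity) hm hmw
          (hw.1.integrableOn_isCompact (isCompact_cube x r)) (hA.setAverage_le x hr)
    _ = C ^ (p - 1) * (1 + r / ρ x) ^ (θ * (p - 1)) * cubeAvg x r fun y => w y ^ (1 - p) := by
        rw [Real.mul_rpow hC.le (by positivity), ← Real.rpow_mul hb.le]

theorem apC_rpow_one_sub (hρ : ∀ x, 0 < ρ x) (hw : IsWeight w) (hC : 0 < C)
    (hA : A1C ρ θ C w) (hp : 1 < p) :
    ApC ρ p (θ * (1 - 1 / p)) (C ^ (1 - 1 / p)) fun y => w y ^ (1 - p) := by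
  intro x r hr
  have := neZero_restrict_cube x hr
  have hb : 0 < 1 + r / ρ x := by have := hρ x; positivity
  have hdual : (fun y => (w y ^ (1 - p)) ^ (1 - p / (p - 1))) =ᵐ[volume] w := by
    have hexp : (1 - p) * (1 - p / (p - 1)) = 1 := by
      field_simp [(sub_pos.2 hp).ne']
      ring
    filter_upwards [hw.2] with y hy
    rw [← Real.rpow_mul hy.le, hexp, Real.rpow_one]
  rw [cubeAvg_congr_ae x r hdual, cubeAvg_eq_setAverage, cubeAvg_eq_setAverage,
    Real.rpow_mul hb.le, ← Real.mul_rpow hC.le (by positivity)]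
  exact average_rpow_mul_average_le_of_average_le hp (by positivity)
    (hA.cubeInf_pos hρ hw hC x hr) (ae_cubeInf_le hw.2 x r)
    (hw.1.integrableOn_isCompact (isCompact_cube x r)) (hA.setAverage_le x hr)

end A1C

theorem A1_neg_power_in_Ap_RHinf_general {d : ℕ} (ρ : EuclideanSpace ℝ (Fin d) → ℝ)
    (C₀ N₀ : ℝ) (hρ : IsCRF ρ C₀ N₀)
    (w : EuclideanSpace ℝ (Fin d) → ℝ) (hw : IsWeight w) (h : A1 ρ w)
    (p : ℝ) (hp : 1 < p) :
    (Ap ρ p (fun x => w x ^ (1 - p)) ∧ RHinf ρ (fun x => w x ^ (1 - p))) ∧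
    (∀ θ, 0 ≤ θ → memA1 ρ θ w →
      memRHinf ρ (θ / (p / (p - 1) - 1)) (fun x => w x ^ (1 - p))) := by
  have hp1 : 0 < p - 1 := sub_pos.2 hp
  have hp' : 0 ≤ 1 - 1 / p := sub_nonneg.2 ((div_le_one (by linarith)).2 hp.le)
  obtain ⟨θ, hθ, C, hC, hA⟩ := h
  refine ⟨⟨⟨θ * (1 - 1 / p), mul_nonneg hθ hp', C ^ (1 - 1 / p), by positivity,
      hA.apC_rpow_one_sub hρ.1 hw hC hp⟩,
    ⟨θ * (p - 1), mul_nonneg hθ hp1.le, C ^ (p - 1), by positivity,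
      hA.rhinfC_rpow_one_sub hρ.1 hw hC hp⟩⟩, fun θ' _ ⟨C', hC', hA'⟩ => ?_⟩
  have hθ' : θ' / (p / (p - 1) - 1) = θ' * (p - 1) := by
    field_simp [hp1.ne']
    ring
  rw [hθ']
  exact ⟨C' ^ (p - 1), by positivity, hA'.rhinfC_rpow_one_sub hρ.1 hw hC' hp⟩

/-- If `w ∈ A₁^ρ` and `1 < p < ∞`, then `w^{1−p} ∈ A_p^ρ ∩ RH_∞^ρ`;
quantitatively, `w ∈ A₁^{ρ,θ}` implies `w^{1−p} ∈ RH_∞^{ρ,θ/(p'−1)}` with `p' = p/(p−1)`. -/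
theorem A1_neg_power_in_Ap_RHinf {d : ℕ} (ρ : EuclideanSpace ℝ (Fin d) → ℝ)
    (C₀ N₀ : ℝ) (hC₀ : 0 < C₀) (hN₀ : 1 ≤ N₀) (hρ : IsCRF ρ C₀ N₀)
    (w : EuclideanSpace ℝ (Fin d) → ℝ) (hw : IsWeight w) (h : A1 ρ w)
    (p : ℝ) (hp : 1 < p) :
    (Ap ρ p (fun x => w x ^ (1 - p)) ∧ RHinf ρ (fun x => w x ^ (1 - p))) ∧
    (∀ θ, 0 ≤ θ → memA1 ρ θ w →
      memRHinf ρ (θ / (p / (p - 1) - 1)) (fun x => w x ^ (1 - p))) :=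
  A1_neg_power_in_Ap_RHinf_general ρ C₀ N₀ hρ w hw h p hp

end
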